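/- Let V = ℝ³ and let ξ, ρ₁ ∈ V* ⊗ ℂ be complex 1-covectors and ρ₂ ∈ ⋀²V* ⊗ ℂ a complex 2-covector such that ξ ≠ 0, ξ ∧ ρ₁ = 0, ξ ∧ ρ₂ = 0, and the real part of ρ₁ ∧ ρ̄₂ is a nonzero element of ⋀³V*. Then the real and imaginary parts of ξ are linearly independent over ℝ, equivalently Re(ξ) ∧ Im(ξ) ≠ 0. (This is the pointwise content of the statement that at a transverse zero of ρ₀, the degree-0 component of a B₃-generalized complex spinor defines a complex coordinate transverse to its zero set.) -/
import Mathlib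


noncomputable section

/-- A mixed-degree complex covector on `V = ℝ³`, described by its coefficients with respect
to the basis `dx_S = dx_{i₁} ∧ … ∧ dx_{i_k}` (for `S = {i₁ < … < i_k} ⊆ {0,1,2}`). -/
abbrev Cov := Finset (Fin 3) → ℂ

/-- The sign `ε(S,T)` with which `dx_S ∧ dx_T = ε(S,T) dx_{S ∪ T}` for disjoint `S`, `T`. -/
def mergeSign (S T : Finset (Fin 3)) : ℂ :=
  (-1 : ℂ) ^ ((S ×ˢ T).filter fun p => p.2 < p.1).card

/-- The wedge product. -/
def wedgeC (α β : Cov) : Cov := fun S =>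
  ∑ T ∈ S.powerset, mergeSign T (S \ T) * α T * β (S \ T)

/-- A covector is homogeneous of degree `k` when only degree-`k` coefficients are nonzero. -/
def IsHomogC (k : ℕ) (ξ : Cov) : Prop := ∀ S, S.card ≠ k → ξ S = 0

/-- Complex conjugation. -/
def conjC (ξ : Cov) : Cov := fun S => (starRingEnd ℂ) (ξ S)

/-- The real part of a covector, as a real covector. -/
def reC (ξ : Cov) : Finset (Fin 3) → ℝ := fun S => (ξ S).re

/-- The imaginary part of a covector, as a real covector. -/
def imC (ξ : Cov) : Finset (Fin 3) → ℝ := fun S => (ξ S).im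

open ComplexConjugate

lemma ms (S T : Finset (Fin 3)) (n : ℕ)
    (h : ((S ×ˢ T).filter fun p => p.2 < p.1).card = n) : mergeSign S T = (-1 : ℂ)^n := by
  rw [mergeSign, h]

lemma w01 (α β : Cov) (hα : IsHomogC 1 α) :
    wedgeC α β {0,1} = α {0} * β {1} - α {1} * β {0} := by
  rw [wedgeC, show ({0,1} : Finset (Fin 3)).powerset = {∅, {0}, {1}, {0,1}} from by decide]
  rw [Finset.sum_insert (by decide), Finset.sum_insert (by decide),
      Finset.sum_insert (by decide), Finset.sum_singleton]
  rw [show ({0,1} : Finset (Fin 3)) \ ∅ = {0,1} from by decide,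
    show ({0,1} : Finset (Fin 3)) \ {0} = {1} from by decide,
    show ({0,1} : Finset (Fin 3)) \ {1} = {0} from by decide,
    show ({0,1} : Finset (Fin 3)) \ {0,1} = ∅ from by decide,
    hα ∅ (by decide), hα {0,1} (by decide),
    ms {0} {1} 0 (by decide), ms {1} {0} 1 (by decide)]
  ring

lemma w02 (α β : Cov) (hα : IsHomogC 1 α) :
    wedgeC α β {0,2} = α {0} * β {2} - α {2} * β {0} := by
  rw [wedgeC, show ({0,2} : Finset (Fin 3)).powerset = {∅, {0}, {2}, {0,2}} from by decide]
  rw [Finset.sum_insert (by decide), Finset.sum_insert (by decide),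
      Finset.sum_insert (by decide), Finset.sum_singleton]
  rw [show ({0,2} : Finset (Fin 3)) \ ∅ = {0,2} from by decide,
    show ({0,2} : Finset (Fin 3)) \ {0} = {2} from by decide,
    show ({0,2} : Finset (Fin 3)) \ {2} = {0} from by decide,
    show ({0,2} : Finset (Fin 3)) \ {0,2} = ∅ from by decide,
    hα ∅ (by decide), hα {0,2} (by decide),
    ms {0} {2} 0 (by decide), ms {2} {0} 1 (by decide)]
  ring

lemma w12 (α β : Cov) (hα : IsHomogC 1 α) :
    wedgeC α β {1,2} = α {1} * β {2} - α {2} * β {1} := by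
  rw [wedgeC, show ({1,2} : Finset (Fin 3)).powerset = {∅, {1}, {2}, {1,2}} from by decide]
  rw [Finset.sum_insert (by decide), Finset.sum_insert (by decide),
      Finset.sum_insert (by decide), Finset.sum_singleton]
  rw [show ({1,2} : Finset (Fin 3)) \ ∅ = {1,2} from by decide,
    show ({1,2} : Finset (Fin 3)) \ {1} = {2} from by decide,
    show ({1,2} : Finset (Fin 3)) \ {2} = {1} from by decide,
    show ({1,2} : Finset (Fin 3)) \ {1,2} = ∅ from by decide,
    hα ∅ (by decide), hα {1,2} (by decide),
    ms {1} {2} 0 (by decide), ms {2} {1} 1 (by decide)]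
  ring

lemma wuniv (α β : Cov) (hα : IsHomogC 1 α) :
    wedgeC α β Finset.univ
      = α {0} * β {1,2} - α {1} * β {0,2} + α {2} * β {0,1} := by
  rw [wedgeC, show (Finset.univ : Finset (Fin 3)).powerset
      = {∅, {0}, {1}, {2}, {0,1}, {0,2}, {1,2}, {0,1,2}} from by decide]
  rw [Finset.sum_insert (by decide), Finset.sum_insert (by decide),
      Finset.sum_insert (by decide), Finset.sum_insert (by decide),
      Finset.sum_insert (by decide), Finset.sum_insert (by decide),
      Finset.sum_insert (by decide), Finset.sum_singleton]
  rw [show (Finset.univ : Finset (Fin 3)) \ {0} = {1,2} from by decide,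
    show (Finset.univ : Finset (Fin 3)) \ {1} = {0,2} from by decide,
    show (Finset.univ : Finset (Fin 3)) \ {2} = {0,1} from by decide,
    hα ∅ (by decide), hα {0,1} (by decide), hα {0,2} (by decide),
    hα {1,2} (by decide), hα {0,1,2} (by decide),
    ms {0} {1,2} 0 (by decide), ms {1} {0,2} 1 (by decide), ms {2} {0,1} 2 (by decide)]
  ring

lemma aux_main (a0 a1 a2 b0 b1 b2 c0 c1 c2 : ℂ)
    (E01 : a0*b1 = a1*b0) (E02 : a0*b2 = a2*b0) (E12 : a1*b2 = a2*b1)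
    (H01 : a1 * conj a0 = conj a1 * a0) (H02 : a2 * conj a0 = conj a2 * a0)
    (H12 : a2 * conj a1 = conj a2 * a1)
    (F : a0*c0 - a1*c1 + a2*c2 = 0)
    (hne : a0 ≠ 0 ∨ a1 ≠ 0 ∨ a2 ≠ 0) :
    b0*conj c0 - b1*conj c1 + b2*conj c2 = 0 := by
  have Fc : conj a0 * conj c0 - conj a1 * conj c1 + conj a2 * conj c2 = 0 := by
    have := congrArg (starRingEnd ℂ) F
    simpa using this
  rcases hne with h|h|h
  · have hc : conj a0 ≠ 0 := by
      intro h0; exact h (by simpa using congrArg (starRingEnd ℂ) h0)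
    have key : (a0 * conj a0) * (b0*conj c0 - b1*conj c1 + b2*conj c2) = 0 := by
      linear_combination (-(conj c1 * conj a0)) * E01 + (conj c2 * conj a0) * E02
        - (conj c1 * b0) * H01 + (conj c2 * b0) * H02 + (a0*b0) * Fc
    exact (mul_eq_zero.mp key).resolve_left (mul_ne_zero h hc)
  · have hc : conj a1 ≠ 0 := by
      intro h0; exact h (by simpa using congrArg (starRingEnd ℂ) h0)
    have key : (a1 * conj a1) * (b0*conj c0 - b1*conj c1 + b2*conj c2) = 0 := by
      linear_combination (-(conj c0 * conj a1)) * E01 - (conj c0 * b1) * H01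
        + (conj c2 * conj a1) * E12 + (conj c2 * b1) * H12 + (a1*b1) * Fc
    exact (mul_eq_zero.mp key).resolve_left (mul_ne_zero h hc)
  · have hc : conj a2 ≠ 0 := by
      intro h0; exact h (by simpa using congrArg (starRingEnd ℂ) h0)
    have key : (a2 * conj a2) * (b0*conj c0 - b1*conj c1 + b2*conj c2) = 0 := by
      linear_combination (-(conj c0 * conj a2)) * E02 - (conj c0 * b2) * H02
        + (conj c1 * conj a2) * E12 + (conj c1 * b2) * H12 + (a2*b2) * Fc
    exact (mul_eq_zero.mp key).resolve_left (mul_ne_zero h hc)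

theorem re_im_independent
    (ξ ρ₁ ρ₂ : Cov)
    (hξ1 : IsHomogC 1 ξ) (hρ₁1 : IsHomogC 1 ρ₁) (hρ₂2 : IsHomogC 2 ρ₂)
    (hξne : ξ ≠ 0)
    (hξρ₁ : wedgeC ξ ρ₁ = 0) (hξρ₂ : wedgeC ξ ρ₂ = 0)
    (hre : (wedgeC ρ₁ (conjC ρ₂) Finset.univ).re ≠ 0) :
    LinearIndependent ℝ ![reC ξ, imC ξ]
      ∧ wedgeC (fun S => ((ξ S).re : ℂ)) (fun S => ((ξ S).im : ℂ)) ≠ 0 := by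
  set a0 := ξ ({0} : Finset (Fin 3)) with ha0d
  set a1 := ξ ({1} : Finset (Fin 3)) with ha1d
  set a2 := ξ ({2} : Finset (Fin 3)) with ha2d
  -- nonvanishing of some coefficient
  have hne : a0 ≠ 0 ∨ a1 ≠ 0 ∨ a2 ≠ 0 := by
    by_contra h
    push_neg at h
    apply hξne
    funext S
    show ξ S = 0
    by_cases hc : S.card = 1
    · have hS : S = {0} ∨ S = {1} ∨ S = {2} := by revert hc; revert S; decide
      rcases hS with rfl|rfl|rfl
      · exact h.1
      · exact h.2.1
      · exact h.2.2
    · exact hξ1 S hc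
  -- equations from ξ ∧ ρ₁ = 0
  have E01 : a0 * ρ₁ {1} = a1 * ρ₁ {0} := by
    have := congrFun hξρ₁ {0,1}
    rw [w01 ξ ρ₁ hξ1] at this
    simp only [Pi.zero_apply] at this
    linear_combination this
  have E02 : a0 * ρ₁ {2} = a2 * ρ₁ {0} := by
    have := congrFun hξρ₁ {0,2}
    rw [w02 ξ ρ₁ hξ1] at this
    simp only [Pi.zero_apply] at this
    linear_combination this
  have E12 : a1 * ρ₁ {2} = a2 * ρ₁ {1} := by
    have := congrFun hξρ₁ {1,2}
    rw [w12 ξ ρ₁ hξ1] at this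
    simp only [Pi.zero_apply] at this
    linear_combination this
  -- equation from ξ ∧ ρ₂ = 0
  have F : a0 * ρ₂ {1,2} - a1 * ρ₂ {0,2} + a2 * ρ₂ {0,1} = 0 := by
    have := congrFun hξρ₂ Finset.univ
    rw [wuniv ξ ρ₂ hξ1] at this
    simpa using this
  -- the hypothesis in coordinates
  have hre' : (ρ₁ {0} * conj (ρ₂ {1,2}) - ρ₁ {1} * conj (ρ₂ {0,2})
      + ρ₁ {2} * conj (ρ₂ {0,1})).re ≠ 0 := by
    rw [wuniv ρ₁ (conjC ρ₂) hρ₁1] at hre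
    exact hre
  -- central contradiction from the vanishing of all minors
  have main : a0.re * a1.im = a1.re * a0.im → a0.re * a2.im = a2.re * a0.im →
      a1.re * a2.im = a2.re * a1.im → False := by
    intro m01 m02 m12
    have m01C : (a0.re : ℂ) * a1.im = (a1.re : ℂ) * a0.im := by exact_mod_cast m01
    have m02C : (a0.re : ℂ) * a2.im = (a2.re : ℂ) * a0.im := by exact_mod_cast m02
    have m12C : (a1.re : ℂ) * a2.im = (a2.re : ℂ) * a1.im := by exact_mod_cast m12
    have r0 : a0 = (a0.re : ℂ) + (a0.im : ℂ) * Complex.I := (Complex.re_add_im a0).symm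
    have r1 : a1 = (a1.re : ℂ) + (a1.im : ℂ) * Complex.I := (Complex.re_add_im a1).symm
    have r2 : a2 = (a2.re : ℂ) + (a2.im : ℂ) * Complex.I := (Complex.re_add_im a2).symm
    have H01 : a1 * conj a0 = conj a1 * a0 := by
      rw [r0, r1]
      simp only [map_add, map_mul, Complex.conj_ofReal, Complex.conj_I]
      linear_combination (2*Complex.I) * m01C
    have H02 : a2 * conj a0 = conj a2 * a0 := by
      rw [r0, r2]
      simp only [map_add, map_mul, Complex.conj_ofReal, Complex.conj_I]
      linear_combination (2*Complex.I) * m02C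
    have H12 : a2 * conj a1 = conj a2 * a1 := by
      rw [r1, r2]
      simp only [map_add, map_mul, Complex.conj_ofReal, Complex.conj_I]
      linear_combination (2*Complex.I) * m12C
    have := aux_main a0 a1 a2 (ρ₁ {0}) (ρ₁ {1}) (ρ₁ {2})
      (ρ₂ {1,2}) (ρ₂ {0,2}) (ρ₂ {0,1}) E01 E02 E12 H01 H02 H12 F hne
    rw [this] at hre'
    simp at hre'
  constructor
  · rw [LinearIndependent.pair_iff]
    intro s t hst
    have h0 : s * a0.re + t * a0.im = 0 := by
      have := congrFun hst {0}
      simpa [reC, imC] using this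
    have h1 : s * a1.re + t * a1.im = 0 := by
      have := congrFun hst {1}
      simpa [reC, imC] using this
    have h2 : s * a2.re + t * a2.im = 0 := by
      have := congrFun hst {2}
      simpa [reC, imC] using this
    have hs : s = 0 := by
      by_contra hs
      exact main
        (mul_left_cancel₀ hs (by linear_combination a1.im * h0 - a0.im * h1))
        (mul_left_cancel₀ hs (by linear_combination a2.im * h0 - a0.im * h2))
        (mul_left_cancel₀ hs (by linear_combination a2.im * h1 - a1.im * h2))
    have ht : t = 0 := by
      by_contra ht
      subst hs
      have y0 : a0.im = 0 :=
        (mul_eq_zero.mp (show t * a0.im = 0 by linear_combination h0)).resolve_left ht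
      have y1 : a1.im = 0 :=
        (mul_eq_zero.mp (show t * a1.im = 0 by linear_combination h1)).resolve_left ht
      have y2 : a2.im = 0 :=
        (mul_eq_zero.mp (show t * a2.im = 0 by linear_combination h2)).resolve_left ht
      exact main (by rw [y0, y1]; ring) (by rw [y0, y2]; ring) (by rw [y1, y2]; ring)
    exact ⟨hs, ht⟩
  · intro h0
    have hX : IsHomogC 1 (fun S => ((ξ S).re : ℂ)) := by
      intro S hS
      simp [hξ1 S hS]
    have g01 := congrFun h0 {0,1}
    have g02 := congrFun h0 {0,2}
    have g12 := congrFun h0 {1,2}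
    simp only [Pi.zero_apply] at g01 g02 g12
    rw [w01 _ _ hX] at g01
    rw [w02 _ _ hX] at g02
    rw [w12 _ _ hX] at g12
    apply main
    · exact_mod_cast (sub_eq_zero.mp g01)
    · exact_mod_cast (sub_eq_zero.mp g02)
    · exact_mod_cast (sub_eq_zero.mp g12)
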